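/- The direct product of a permutation strongly connected automaton and a synchronizing strongly connected automaton (over the same input alphabet) is strongly connected. -/

import Mathlib

/-- Extended transition function of an automaton: the action of a word on a state. -/
def run {S Alph : Type*} (δ : S → Alph → S) (s : S) (x : List Alph) : S :=
  x.foldl δ s

/-- Single-letter transition of the direct product automaton. -/
def prodStep {S T Alph : Type*} (δ : S → Alph → S) (γ : T → Alph → T) :
    S × T → Alph → S × T :=
  fun p a => (δ p.1 a, γ p.2 a)

/-- An automaton is strongly connected if every state reaches every state. -/
def StronglyConnected {S Alph : Type*} (δ : S → Alph → S) : Prop :=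
  ∀ s t : S, ∃ x : List Alph, run δ s x = t

/-- A word is a reset input function if it sends every state to one fixed state. -/
def IsReset {S Alph : Type*} (δ : S → Alph → S) (x : List Alph) : Prop :=
  ∃ t : S, ∀ s : S, run δ s x = t

/-- A synchronizing automaton has at least one reset input function. -/
def Synchronizing {S Alph : Type*} (δ : S → Alph → S) : Prop :=
  ∃ x : List Alph, IsReset δ x

/-- A permutation automaton: every input word acts bijectively on the states. -/
def PermutationAut {S Alph : Type*} (δ : S → Alph → S) : Prop :=
  ∀ x : List Alph, Function.Bijective (fun s : S => run δ s x)

/-- The range `Im_A(x)` of the input function given by the word `x`. -/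
def Im {S Alph : Type*} (δ : S → Alph → S) (x : List Alph) : Set S :=
  Set.range fun s : S => run δ s x

/-- The rank of a word: cardinality of its range. -/
noncomputable def wordRank {S Alph : Type*} (δ : S → Alph → S) (x : List Alph) : ℕ :=
  (Im δ x).ncard

/-- `[x]_A` lies in the minimal ideal `I(A)` of the transition semigroup:
`x` is a nonempty word of minimal rank among nonempty words. -/
def InMinIdeal {S Alph : Type*} (δ : S → Alph → S) (x : List Alph) : Prop :=
  x ≠ [] ∧ ∀ y : List Alph, y ≠ [] → wordRank δ x ≤ wordRank δ y

/-- `x ≡_A y` : the words `x` and `y` act equally on every state. -/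
def ActEq {S Alph : Type*} (δ : S → Alph → S) (x y : List Alph) : Prop :=
  ∀ s : S, run δ s x = run δ s y

/-- `[e]_A` is an idempotent element of the minimal ideal `I(A)`. -/
def IdemMin {S Alph : Type*} (δ : S → Alph → S) (e : List Alph) : Prop :=
  InMinIdeal δ e ∧ ActEq δ (e ++ e) e

/-- The minimal ideal `I(A)` is right simple: for all `a, b ∈ I(A)` there is
`c ∈ I(A)` with `ac = b`. -/
def RightSimpleMin {S Alph : Type*} (δ : S → Alph → S) : Prop :=
  ∀ a b : List Alph, InMinIdeal δ a → InMinIdeal δ b →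
    ∃ c : List Alph, InMinIdeal δ c ∧ ActEq δ (a ++ c) b

/-- The minimal ideal `I(A)` is a right group: right simple with an idempotent. -/
def RightGroupMin {S Alph : Type*} (δ : S → Alph → S) : Prop :=
  RightSimpleMin δ ∧ ∃ e : List Alph, IdemMin δ e

/-- The ranges of the idempotents of `I(A)` form a partition of the state set. -/
def IdemPartition {S Alph : Type*} (δ : S → Alph → S) : Prop :=
  (∀ s : S, ∃ e : List Alph, IdemMin δ e ∧ s ∈ Im δ e) ∧
  ∀ e f : List Alph, IdemMin δ e → IdemMin δ f →
    Im δ e ∩ Im δ f = ∅ ∨ Im δ e = Im δ f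

/-- A quasi-ideal automaton. -/
def QuasiIdeal {S Alph : Type*} (δ : S → Alph → S) : Prop :=
  StronglyConnected δ ∧ RightGroupMin δ ∧ IdemPartition δ

/-- An automaton congruence: an equivalence relation on states compatible with
the action of every word. -/
def AutCongruence {S Alph : Type*} (δ : S → Alph → S) (r : S → S → Prop) : Prop :=
  Equivalence r ∧ ∀ s t : S, r s t → ∀ z : List Alph, r (run δ s z) (run δ t z)

/-- The congruence `π` : `s π t` iff `sx = tx` for every `[x]_A ∈ I(A)`. -/
def piRel {S Alph : Type*} (δ : S → Alph → S) (s t : S) : Prop :=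
  ∀ x : List Alph, InMinIdeal δ x → run δ s x = run δ t x

/-- The congruence `ρ` : `s ρ t` iff `s, t ∈ Im_A(e)` for some `[e]_A ∈ E(A)`. -/
def rhoRel {S Alph : Type*} (δ : S → Alph → S) (s t : S) : Prop :=
  ∃ e : List Alph, IdemMin δ e ∧ s ∈ Im δ e ∧ t ∈ Im δ e

@[simp]
lemma run_append {S Alph : Type*} (δ : S → Alph → S) (s : S) (x y : List Alph) :
    run δ s (x ++ y) = run δ (run δ s x) y :=
  List.foldl_append

@[simp]
lemma run_prodStep {S T Alph : Type*} (δ : S → Alph → S) (γ : T → Alph → T)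
    (p : S × T) (x : List Alph) :
    run (prodStep δ γ) p x = (run δ p.1 x, run γ p.2 x) := by
  induction x generalizing p with
  | nil => rfl
  | cons a x ih => exact ih (prodStep δ γ p a)

lemma StronglyConnected.exists_forall_run_eq_of_synchronizing {S Alph : Type*} {δ : S → Alph → S}
    (hsc : StronglyConnected δ) (hsync : Synchronizing δ) (t : S) :
    ∃ x : List Alph, ∀ s : S, run δ s x = t := by
  obtain ⟨w, t₀, hw⟩ := hsync
  obtain ⟨u, hu⟩ := hsc t₀ t
  exact ⟨w ++ u, fun s => by rw [run_append, hw, hu]⟩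

theorem stmt2_general {S T Alph : Type*}
    (δ : S → Alph → S) (γ : T → Alph → T)
    (hAperm : PermutationAut δ) (hAsc : StronglyConnected δ)
    (hBsync : Synchronizing γ) (hBsc : StronglyConnected γ) :
    StronglyConnected (prodStep δ γ) := by
  rintro ⟨s, t⟩ ⟨s', t'⟩
  obtain ⟨x, hx⟩ := hBsc.exists_forall_run_eq_of_synchronizing hBsync t'
  obtain ⟨s₁, hs₁⟩ := (hAperm x).2 s'
  obtain ⟨v, hv⟩ := hAsc s s₁
  exact ⟨v ++ x, by simp [hv, hs₁, hx]⟩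

/-- The direct product of a permutation strongly connected automaton and a
synchronizing strongly connected automaton is strongly connected. -/
theorem stmt2 {S T Alph : Type*} [Finite S] [Finite T]
    (δ : S → Alph → S) (γ : T → Alph → T)
    (hAperm : PermutationAut δ) (hAsc : StronglyConnected δ)
    (hBsync : Synchronizing γ) (hBsc : StronglyConnected γ) :
    StronglyConnected (prodStep δ γ) :=
  stmt2_general δ γ hAperm hAsc hBsync hBsc
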